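/- arXiv:2511.07449 — 5 statements merged into one kernel-verified Lean document; each statement's English description precedes it below -/
import Mathlib

section
/- The function I₀ satisfies the modified Bessel differential equation of order zero: for every real x, x·I₀''(x) + I₀'(x) − x·I₀(x) = 0. -/
/-!
Differentiating under the integral sign gives `I₀⁽ᵏ⁾ = π⁻¹ ∫₀^π cosᵏ θ · e^{x cos θ} dθ`. Since
`cos² = 1 - sin²`, the equation reduces to `∫₀^π cos θ · e^{x cos θ} = x ∫₀^π sin² θ · e^{x cos θ}`,
which is integration by parts against `sin`, whose boundary terms vanish at `0` and `π`.
-/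

open Real

/-- The modified Bessel function of the first kind of order zero,
`I₀(x) = (1/π) ∫₀^π exp (x cos θ) dθ`. -/
noncomputable def I0 (x : ℝ) : ℝ := (1 / π) * ∫ θ in (0:ℝ)..π, Real.exp (x * Real.cos θ)

open intervalIntegral

noncomputable def cosMoment (n : ℕ) (x : ℝ) : ℝ :=
  ∫ θ in (0:ℝ)..π, cos θ ^ n * exp (x * cos θ)

lemma abs_cos_pow_mul_exp_le (n : ℕ) (θ : ℝ) {y r : ℝ} (hy : |y| ≤ r) :
    |cos θ ^ n * exp (y * cos θ)| ≤ exp r := by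
  have hcos : |cos θ| ≤ 1 := abs_cos_le_one θ
  have hexp : y * cos θ ≤ r :=
    calc y * cos θ ≤ |y| * |cos θ| := (le_abs_self _).trans (abs_mul y (cos θ)).le
      _ ≤ |y| * 1 := by gcongr
      _ ≤ r := by linarith
  rw [abs_mul, abs_pow, abs_exp, ← one_mul (exp r)]
  exact mul_le_mul (pow_le_one₀ (abs_nonneg _) hcos) (exp_le_exp.mpr hexp) (exp_pos _).le
    zero_le_one

lemma hasDerivAt_cosMoment (n : ℕ) (x : ℝ) :
    HasDerivAt (cosMoment n) (cosMoment (n + 1) x) x := by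
  have hderiv (θ y : ℝ) : HasDerivAt (fun y => cos θ ^ n * exp (y * cos θ))
      (cos θ ^ (n + 1) * exp (y * cos θ)) y :=
    (((hasDerivAt_mul_const (cos θ)).exp).const_mul (cos θ ^ n)).congr_deriv (by ring)
  refine (hasDerivAt_integral_of_dominated_loc_of_deriv_le
    (F := fun y θ => cos θ ^ n * exp (y * cos θ))
    (F' := fun y θ => cos θ ^ (n + 1) * exp (y * cos θ)) (bound := fun _ => exp (|x| + 1))
    (Metric.ball_mem_nhds x one_pos) ?_ ?_ ?_ ?_ intervalIntegrable_const ?_).2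
  · exact .of_forall fun y => (by fun_prop : Continuous _).aestronglyMeasurable
  · exact (by fun_prop : Continuous _).intervalIntegrable _ _
  · exact (by fun_prop : Continuous _).aestronglyMeasurable
  · refine .of_forall fun θ _ y hy => abs_cos_pow_mul_exp_le (n + 1) θ ?_
    have := abs_sub_abs_le_abs_sub y x
    rw [Metric.mem_ball, dist_eq] at hy
    linarith
  · exact .of_forall fun θ _ y _ => hderiv θ y

lemma deriv_cosMoment (n : ℕ) : deriv (cosMoment n) = cosMoment (n + 1) :=
  funext fun x => (hasDerivAt_cosMoment n x).deriv

lemma cosMoment_one_eq_integral_sin_sq (x : ℝ) :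
    cosMoment 1 x = x * ∫ θ in (0:ℝ)..π, sin θ ^ 2 * exp (x * cos θ) := by
  have hderiv (θ : ℝ) : HasDerivAt (fun θ => sin θ * exp (x * cos θ))
      (cos θ * exp (x * cos θ) - x * (sin θ ^ 2 * exp (x * cos θ))) θ :=
    ((hasDerivAt_sin θ).fun_mul ((hasDerivAt_cos θ).const_mul x).exp).congr_deriv (by ring)
  have hibp := integral_eq_sub_of_hasDerivAt (a := 0) (b := π) (fun θ _ => hderiv θ)
    ((by fun_prop : Continuous _).intervalIntegrable _ _)
  rw [integral_sub ((by fun_prop : Continuous _).intervalIntegrable _ _)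
    ((by fun_prop : Continuous _).intervalIntegrable _ _), integral_const_mul] at hibp
  simp only [sin_pi, sin_zero, zero_mul, sub_zero] at hibp
  simp only [cosMoment, pow_one]
  linarith

lemma cosMoment_zero_eq_cosMoment_two_add (x : ℝ) :
    cosMoment 0 x = cosMoment 2 x + ∫ θ in (0:ℝ)..π, sin θ ^ 2 * exp (x * cos θ) := by
  rw [cosMoment, cosMoment, ← integral_add ((by fun_prop : Continuous _).intervalIntegrable _ _)
    ((by fun_prop : Continuous _).intervalIntegrable _ _)]
  congr 1 with θ
  linear_combination (-exp (x * cos θ)) * sin_sq_add_cos_sq θ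

lemma cosMoment_bessel_relation (x : ℝ) : x * cosMoment 2 x + cosMoment 1 x - x * cosMoment 0 x = 0 := by
  rw [cosMoment_one_eq_integral_sin_sq, cosMoment_zero_eq_cosMoment_two_add]
  ring

lemma I0_eq_cosMoment : I0 = fun x => (1 / π) * cosMoment 0 x := by
  funext x
  simp only [I0, cosMoment, pow_zero, one_mul]

/-- `I₀` satisfies the modified Bessel differential equation of order zero:
`x·I₀''(x) + I₀'(x) − x·I₀(x) = 0` for every real `x`. -/
theorem I0_modified_bessel_ode (x : ℝ) :
    x * deriv (deriv I0) x + deriv I0 x - x * I0 x = 0 := by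
  simp only [I0_eq_cosMoment, deriv_const_mul_field', deriv_cosMoment]
  linear_combination (1 / π) * cosMoment_bessel_relation x
end

section
/- The function K₀ satisfies the modified Bessel differential equation of order zero on the positive half-line: for every x > 0, x·K₀''(x) + K₀'(x) − x·K₀(x) = 0. -/
/-!
Differentiating under the integral sign, `K₀' = -∫ cosh t · e^{-x cosh t}` and
`K₀'' = ∫ cosh² t · e^{-x cosh t}`, so the equation becomes
`∫₀^∞ (x sinh² t - cosh t) e^{-x cosh t} dt = 0`. That integrand is the derivative of
`-sinh t · e^{-x cosh t}`, which vanishes at `0` and at `∞`. All dominations come from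
`cosh^k t · e^{-c cosh t} ≤ k! (2/c)^k e^{-ct/2}`.
-/

open Real MeasureTheory Set

/-- The modified Bessel function of the second kind of order zero. -/
noncomputable def K0 (x : ℝ) : ℝ := ∫ t in Ioi (0:ℝ), Real.exp (-x * Real.cosh t)

open Filter Topology
open scoped Nat

noncomputable def coshMoment (k : ℕ) (x : ℝ) : ℝ :=
  ∫ t in Ioi (0:ℝ), cosh t ^ k * exp (-x * cosh t)

lemma K0_eq_coshMoment_zero : K0 = coshMoment 0 := by
  funext x
  simp [K0, coshMoment]

lemma pow_mul_exp_neg_le {c u : ℝ} (k : ℕ) (hc : 0 < c) (hu : 0 ≤ u) :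
    u ^ k * exp (-c * u) ≤ k ! * (2 / c) ^ k * exp (-(c / 2) * u) := by
  have h := pow_div_factorial_le_exp (c / 2 * u) (by positivity) k
  have hpow : u ^ k ≤ k ! * (2 / c) ^ k * exp (c / 2 * u) := by
    rw [div_le_iff₀ (by positivity), mul_pow] at h
    calc u ^ k = (c / 2) ^ k * u ^ k * (2 / c) ^ k := by
          rw [mul_comm ((c / 2) ^ k), mul_assoc, ← mul_pow]; field_simp; simp
      _ ≤ exp (c / 2 * u) * k ! * (2 / c) ^ k := by gcongr
      _ = k ! * (2 / c) ^ k * exp (c / 2 * u) := by ring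
  calc u ^ k * exp (-c * u) ≤ k ! * (2 / c) ^ k * exp (c / 2 * u) * exp (-c * u) := by gcongr
    _ = k ! * (2 / c) ^ k * exp (-(c / 2) * u) := by rw [mul_assoc, ← exp_add]; ring_nf

lemma cosh_pow_mul_exp_neg_le {c t : ℝ} (k : ℕ) (hc : 0 < c) (ht : 0 ≤ t) :
    cosh t ^ k * exp (-c * cosh t) ≤ k ! * (2 / c) ^ k * exp (-(c / 2) * t) := by
  have hcosh : t ≤ cosh t := (self_le_sinh_iff.2 ht).trans (sinh_lt_cosh t).le
  calc cosh t ^ k * exp (-c * cosh t) ≤ k ! * (2 / c) ^ k * exp (-(c / 2) * cosh t) :=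
        pow_mul_exp_neg_le k hc (cosh_pos t).le
    _ ≤ k ! * (2 / c) ^ k * exp (-(c / 2) * t) := by
        gcongr k ! * (2 / c) ^ k * exp ?_
        nlinarith

lemma integrableOn_cosh_pow_mul_exp_neg (k : ℕ) {c : ℝ} (hc : 0 < c) :
    IntegrableOn (fun t ↦ cosh t ^ k * exp (-c * cosh t)) (Ioi 0) := by
  refine ((exp_neg_integrableOn_Ioi 0 (half_pos hc)).const_mul (k ! * (2 / c) ^ k)).mono'
    (by fun_prop) ?_
  filter_upwards [self_mem_ae_restrict measurableSet_Ioi] with t ht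
  rw [norm_of_nonneg (by positivity)]
  exact cosh_pow_mul_exp_neg_le k hc (le_of_lt ht)

lemma hasDerivAt_coshMoment (k : ℕ) {x : ℝ} (hx : 0 < x) :
    HasDerivAt (coshMoment k) (-coshMoment (k + 1) x) x := by
  have hball : ∀ y ∈ Metric.ball x (x / 2), x / 2 ≤ y := fun y hy ↦ by
    rw [Metric.mem_ball, dist_eq_norm, norm_eq_abs, abs_lt] at hy
    linarith [hy.1]
  rw [coshMoment, ← integral_neg]
  refine (hasDerivAt_integral_of_dominated_loc_of_deriv_le
    (F := fun y t ↦ cosh t ^ k * exp (-y * cosh t))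
    (F' := fun y t ↦ -(cosh t ^ (k + 1) * exp (-y * cosh t)))
    (bound := fun t ↦ cosh t ^ (k + 1) * exp (-(x / 2) * cosh t))
    (Metric.ball_mem_nhds x (half_pos hx)) (.of_forall fun _ ↦ by fun_prop)
    (integrableOn_cosh_pow_mul_exp_neg k hx) (by fun_prop) ?_
    (integrableOn_cosh_pow_mul_exp_neg (k + 1) (half_pos hx)) ?_).2
  · refine .of_forall fun t y hy ↦ ?_
    rw [norm_neg, norm_of_nonneg (by positivity)]
    gcongr
    exact hball y hy
  · exact .of_forall fun t y _ ↦
      (((hasDerivAt_neg y).mul_const (cosh t)).exp.const_mul (cosh t ^ k)).congr_deriv (by ring)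

lemma tendsto_sinh_mul_exp_neg_cosh {x : ℝ} (hx : 0 < x) :
    Tendsto (fun t ↦ sinh t * exp (-x * cosh t)) atTop (𝓝 0) := by
  have hdecay : Tendsto (fun t ↦ 1 ! * (2 / x) ^ 1 * exp (-(x / 2) * t)) atTop (𝓝 0) := by
    simpa using ((tendsto_exp_neg_atTop_nhds_zero).comp
      (tendsto_id.const_mul_atTop (half_pos hx))).const_mul (2 / x)
  refine squeeze_zero_norm' ?_ hdecay
  filter_upwards [eventually_ge_atTop 0] with t ht
  calc ‖sinh t * exp (-x * cosh t)‖ ≤ cosh t ^ 1 * exp (-x * cosh t) := by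
        rw [norm_mul, norm_of_nonneg (exp_pos _).le, pow_one]
        gcongr
        rw [norm_eq_abs, abs_sinh, ← cosh_abs]
        exact (sinh_lt_cosh _).le
    _ ≤ _ := cosh_pow_mul_exp_neg_le 1 hx ht

lemma coshMoment_recurrence {x : ℝ} (hx : 0 < x) :
    x * coshMoment 2 x - coshMoment 1 x - x * coshMoment 0 x = 0 := by
  have hint (k : ℕ) := integrableOn_cosh_pow_mul_exp_neg k hx
  -- The powers `^ 1` and `^ 0` make the three pieces literally the integrands of `coshMoment`.
  have hderiv (t : ℝ) : HasDerivAt (fun t ↦ -(sinh t * exp (-x * cosh t)))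
      (x * (cosh t ^ 2 * exp (-x * cosh t)) - cosh t ^ 1 * exp (-x * cosh t)
        - x * (cosh t ^ 0 * exp (-x * cosh t))) t :=
    ((hasDerivAt_sinh t).mul ((hasDerivAt_cosh t).const_mul (-x)).exp).neg.congr_deriv
      (by linear_combination (x * exp (-x * cosh t)) * sinh_sq t)
  have hftc := integral_Ioi_of_hasDerivAt_of_tendsto' (fun t _ ↦ hderiv t)
    ((((hint 2).const_mul x).sub (hint 1)).sub ((hint 0).const_mul x))
    (tendsto_sinh_mul_exp_neg_cosh hx).neg
  rw [integral_sub, integral_sub, integral_const_mul, integral_const_mul] at hftc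
  · simpa [coshMoment] using hftc
  · exact (hint 2).const_mul x
  · exact hint 1
  · exact ((hint 2).const_mul x).sub (hint 1)
  · exact (hint 0).const_mul x

/-- `K₀` satisfies the modified Bessel differential equation of order zero on the
positive half-line: `x·K₀''(x) + K₀'(x) − x·K₀(x) = 0` for every `x > 0`. -/
theorem K0_modified_bessel_ode (x : ℝ) (hx : 0 < x) :
    x * deriv (deriv K0) x + deriv K0 x - x * K0 x = 0 := by
  have hderiv : deriv K0 =ᶠ[𝓝 x] fun y ↦ -coshMoment 1 y := by
    filter_upwards [Ioi_mem_nhds hx] with y hy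
    rw [K0_eq_coshMoment_zero]
    exact (hasDerivAt_coshMoment 0 hy).deriv
  have hderiv2 : deriv (deriv K0) x = coshMoment 2 x := by
    rw [hderiv.deriv_eq, deriv.fun_neg, (hasDerivAt_coshMoment 1 hx).deriv, neg_neg]
  rw [hderiv2, hderiv.eq_of_nhds, K0_eq_coshMoment_zero]
  linarith [coshMoment_recurrence hx]
end

section
/- For every x > 0, the derivative of K₀ at x equals −K₁(x), i.e. K₀'(x) = −K₁(x). -/
open Real MeasureTheory Set

/-- The modified Bessel function of the second kind of order one,
`K₁(x) = ∫₀^∞ exp (−x cosh t) cosh t dt`. -/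
noncomputable def K1 (x : ℝ) : ℝ :=
  ∫ t in Ioi (0:ℝ), Real.exp (-x * Real.cosh t) * Real.cosh t

/-! Differentiation under the integral sign: on `y > x / 2` the `y`-derivative
`-exp (-y cosh t) cosh t` of the integrand of `K₀` is dominated by the integrand of `K₁`
at `x / 2`, which is integrable because `exp (-(x/2) cosh t)` decays like `exp (-(x/2) t)`. -/

lemma Real.self_le_cosh (t : ℝ) : t ≤ cosh t := by
  rcases le_total 0 t with ht | ht
  · exact (self_le_sinh_iff.2 ht).trans (sinh_lt_cosh t).le
  · exact ht.trans (cosh_pos t).le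

lemma Real.exp_neg_mul_mul_le {c : ℝ} (hc : 0 < c) (u : ℝ) :
    exp (-c * u) * u ≤ 2 / c * exp (-(c / 2) * u) := by
  have h : c / 2 * u ≤ exp (c / 2 * u) := (add_one_le_exp _).trans' (by linarith)
  calc exp (-c * u) * u = 2 / c * (exp (-c * u) * (c / 2 * u)) := by field_simp
    _ ≤ 2 / c * (exp (-c * u) * exp (c / 2 * u)) := by gcongr
    _ = 2 / c * exp (-(c / 2) * u) := by rw [← exp_add]; ring_nf

lemma integrableOn_exp_neg_mul_cosh {c : ℝ} (hc : 0 < c) :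
    IntegrableOn (fun t ↦ exp (-c * cosh t)) (Ioi 0) := by
  refine (exp_neg_integrableOn_Ioi 0 hc).mono'
    (by fun_prop : Continuous fun t ↦ exp (-c * cosh t)).aestronglyMeasurable
    (ae_of_all _ fun t ↦ ?_)
  rw [norm_of_nonneg (exp_pos _).le]
  exact exp_le_exp.2 (by nlinarith [self_le_cosh t])

lemma integrableOn_exp_neg_mul_cosh_mul_cosh {c : ℝ} (hc : 0 < c) :
    IntegrableOn (fun t ↦ exp (-c * cosh t) * cosh t) (Ioi 0) := by
  refine ((integrableOn_exp_neg_mul_cosh (half_pos hc)).const_mul (2 / c)).mono'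
    (by fun_prop : Continuous fun t ↦ exp (-c * cosh t) * cosh t).aestronglyMeasurable
    (ae_of_all _ fun t ↦ ?_)
  rw [norm_of_nonneg (by positivity)]
  exact exp_neg_mul_mul_le hc (cosh t)

lemma hasDerivAt_exp_neg_mul_cosh (t y : ℝ) :
    HasDerivAt (fun y ↦ exp (-y * cosh t)) (-(exp (-y * cosh t) * cosh t)) y := by
  simpa using ((hasDerivAt_neg y).mul_const (cosh t)).exp

theorem hasDerivAt_K0 {x : ℝ} (hx : 0 < x) : HasDerivAt K0 (-K1 x) x := by
  have hball : Metric.ball x (x / 2) ∈ nhds x := Metric.ball_mem_nhds x (half_pos hx)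
  have hdom : ∀ t, ∀ y ∈ Metric.ball x (x / 2),
      ‖-(exp (-y * cosh t) * cosh t)‖ ≤ exp (-(x / 2) * cosh t) * cosh t := by
    intro t y hy
    have hxy : x / 2 ≤ y := by
      rw [Metric.mem_ball, dist_eq, abs_lt] at hy; linarith
    rw [norm_neg, norm_of_nonneg (by positivity)]
    gcongr
  have h := hasDerivAt_integral_of_dominated_loc_of_deriv_le hball
    (.of_forall fun y ↦
      (by fun_prop : Continuous fun t ↦ exp (-y * cosh t)).aestronglyMeasurable)
    (integrableOn_exp_neg_mul_cosh hx)
    (by fun_prop : Continuous fun t ↦ -(exp (-x * cosh t) * cosh t)).aestronglyMeasurable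
    (ae_of_all _ hdom) (integrableOn_exp_neg_mul_cosh_mul_cosh (half_pos hx))
    (ae_of_all _ fun t y _ ↦ hasDerivAt_exp_neg_mul_cosh t y)
  rw [integral_neg] at h
  exact h.2

/-- For every `x > 0`, `K₀'(x) = −K₁(x)`. -/
theorem deriv_K0 (x : ℝ) (hx : 0 < x) : deriv K0 x = -K1 x :=
  (hasDerivAt_K0 hx).deriv
end

section
/- Fourier transform of the disk indicator in two dimensions: let L > 0 and let f : ℝ² → ℂ be the indicator function of the closed ball of radius L centered at the origin. Then for every ξ ∈ ℝ² with ξ ≠ 0, the Fourier transform 𝓕f(ξ) = ∫_{ℝ²} f(x)·exp(−2πi⟨x,ξ⟩) dx equals L·J₁(2πL·‖ξ‖)/‖ξ‖. -/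
open Real MeasureTheory

/-!
Rotate `ξ` onto the positive real axis of `ℂ ≅ ℝ²` and pass to polar coordinates. By Bessel's
integral the angular integral of `exp (-2πi ‖ξ‖ r cos θ)` is `2π J₀(2π ‖ξ‖ r)`, and the radial
integral `∫₀ᴸ r J₀(a r) dr = L J₁(a L) / a` follows from `(s J₁(s))' = s J₀(s)`, which comes from
differentiating under the integral sign and one integration by parts.
-/

noncomputable def J1 (x : ℝ) : ℝ := (1 / π) * ∫ θ in (0:ℝ)..π, Real.cos (θ - x * Real.sin θ)

noncomputable def J0 (x : ℝ) : ℝ := (1 / π) * ∫ θ in (0:ℝ)..π, Real.cos (x * Real.sin θ)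

theorem integral_cos_sub_mul_sin (s : ℝ) :
    ∫ θ in (0:ℝ)..π, cos (θ - s * sin θ) = s * ∫ θ in (0:ℝ)..π, cos θ * cos (θ - s * sin θ) := by
  have hderiv : ∀ θ ∈ Set.uIcc 0 π, HasDerivAt (fun θ => sin (θ - s * sin θ))
      (cos (θ - s * sin θ) - s * (cos θ * cos (θ - s * sin θ))) θ := fun θ _ => by
    convert ((hasDerivAt_id' θ).fun_sub ((hasDerivAt_sin θ).const_mul s)).sin using 1
    ring
  have hftc := intervalIntegral.integral_eq_sub_of_hasDerivAt hderiv
    (Continuous.intervalIntegrable (by fun_prop) _ _)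
  rw [intervalIntegral.integral_sub (Continuous.intervalIntegrable (by fun_prop) _ _)
      (Continuous.intervalIntegrable (by fun_prop) _ _), intervalIntegral.integral_const_mul] at hftc
  simp only [sin_pi, sin_zero, mul_zero, sub_zero, sub_self] at hftc
  linarith

theorem hasDerivAt_integral_cos_sub_mul_sin (s : ℝ) :
    HasDerivAt (fun s => ∫ θ in (0:ℝ)..π, cos (θ - s * sin θ))
      (∫ θ in (0:ℝ)..π, sin θ * sin (θ - s * sin θ)) s := by
  refine (intervalIntegral.hasDerivAt_integral_of_dominated_loc_of_deriv_le (bound := fun _ => 1)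
    (F := fun s θ => cos (θ - s * sin θ)) (F' := fun s θ => sin θ * sin (θ - s * sin θ))
    Filter.univ_mem (.of_forall fun _ => (Continuous.aestronglyMeasurable (by fun_prop)))
    (Continuous.intervalIntegrable (by fun_prop) _ _)
    (Continuous.aestronglyMeasurable (by fun_prop)) (.of_forall fun θ _ x _ => ?_)
    intervalIntegrable_const (.of_forall fun θ _ x _ => ?_)).2
  · rw [norm_mul, ← one_mul 1]
    exact mul_le_mul (abs_sin_le_one θ) (abs_sin_le_one _) (norm_nonneg _) zero_le_one
  · exact ((hasDerivAt_const x θ).fun_sub ((hasDerivAt_id' x).mul_const (sin θ))).cos.congr_deriv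
      (by ring)

theorem hasDerivAt_mul_J1 (s : ℝ) : HasDerivAt (fun s => s * J1 s) (s * J0 s) s := by
  have hJ1 : (fun s => s * J1 s) = fun s => π⁻¹ * (s * ∫ θ in (0:ℝ)..π, cos (θ - s * sin θ)) := by
    ext s; simp only [J1]; ring
  rw [hJ1]
  refine (((hasDerivAt_id' s).fun_mul (hasDerivAt_integral_cos_sub_mul_sin s)).const_mul
    π⁻¹).congr_deriv ?_
  have hsum : ∫ θ in (0:ℝ)..π, cos (s * sin θ) = (∫ θ in (0:ℝ)..π, cos θ * cos (θ - s * sin θ))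
      + ∫ θ in (0:ℝ)..π, sin θ * sin (θ - s * sin θ) := by
    rw [← intervalIntegral.integral_add (Continuous.intervalIntegrable (by fun_prop) _ _)
      (Continuous.intervalIntegrable (by fun_prop) _ _)]
    congr with θ
    rw [← cos_sub, sub_sub_cancel]
  rw [J0, hsum, integral_cos_sub_mul_sin s]
  ring

theorem continuous_J0 : Continuous J0 :=
  continuous_const.mul
    (intervalIntegral.continuous_parametric_intervalIntegral_of_continuous' (by fun_prop) _ _)

theorem integral_mul_J0 (x : ℝ) : ∫ s in (0:ℝ)..x, s * J0 s = x * J1 x := by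
  rw [intervalIntegral.integral_eq_sub_of_hasDerivAt (fun s _ => hasDerivAt_mul_J1 s)
    ((continuous_id.mul continuous_J0).intervalIntegrable _ _), zero_mul, sub_zero]

theorem integral_mul_J0_comp_mul_left {a : ℝ} (ha : a ≠ 0) (L : ℝ) :
    ∫ r in (0:ℝ)..L, r * J0 (a * r) = L * J1 (a * L) / a := by
  have h := intervalIntegral.integral_comp_mul_left (fun s => s * J0 s) ha (a := 0) (b := L)
  simp only [mul_zero, integral_mul_J0, mul_assoc, intervalIntegral.integral_const_mul,
    smul_eq_mul] at h
  field_simp at h ⊢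
  linarith

theorem intervalIntegral.integral_neg_self_eq_integral_add_comp_neg
    {E : Type*} [NormedAddCommGroup E] [NormedSpace ℝ E]
    {f : ℝ → E} {a : ℝ} (hf : IntervalIntegrable f volume (-a) a) :
    ∫ x in (-a)..a, f x = ∫ x in 0..a, (f x + f (-x)) := by
  have hzero : (0 : ℝ) ∈ Set.uIcc (-a) a := by
    rcases le_total 0 a with h | h <;> simp [h]
  have hneg : IntervalIntegrable f volume (-a) 0 := hf.mono_set (Set.uIcc_subset_uIcc_left hzero)
  have hpos : IntervalIntegrable f volume 0 a := hf.mono_set (Set.uIcc_subset_uIcc_right hzero)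
  rw [← intervalIntegral.integral_add_adjacent_intervals hneg hpos,
    intervalIntegral.integral_add hpos (by simpa using (hneg.comp_mul_left (c := -1)).symm),
    add_comm,
    intervalIntegral.integral_comp_neg, neg_zero]

theorem integral_exp_neg_mul_cos_mul_I (t : ℝ) :
    ∫ θ in (-π)..π, Complex.exp (↑(-(t * cos θ)) * Complex.I) = 2 * π * J0 t := by
  set h : ℝ → ℂ := fun θ => Complex.exp (↑(-(t * cos θ)) * Complex.I)
  have hper : Function.Periodic h (2 * π) := fun θ => by simp only [h, cos_add_two_pi]
  have hshift : ∫ θ in (-π)..π, h θ = ∫ θ in (-π)..π, h (θ + π / 2) := by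
    rw [intervalIntegral.integral_comp_add_right]
    convert hper.intervalIntegral_add_eq (-π) (-π + π / 2) using 2 <;> ring
  have hsym : ∀ θ, h (θ + π / 2) + h (-θ + π / 2) = 2 * (cos (t * sin θ) : ℂ) := fun θ => by
    simp only [h, cos_add_pi_div_two, sin_neg]
    push_cast
    rw [Complex.two_cos]
    ring_nf
  rw [hshift, intervalIntegral.integral_neg_self_eq_integral_add_comp_neg
    (Continuous.intervalIntegrable (by fun_prop) _ _)]
  simp only [hsym, intervalIntegral.integral_const_mul, intervalIntegral.integral_ofReal, J0]
  push_cast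
  field_simp

theorem exists_linearIsometryEquiv_complex_apply_eq_one {E : Type*} [NormedAddCommGroup E]
    [InnerProductSpace ℝ E] (hE : Module.finrank ℝ E = 2) {u : E} (hu : ‖u‖ = 1) :
    ∃ e : E ≃ₗᵢ[ℝ] ℂ, e u = 1 := by
  have : FiniteDimensional ℝ E := Module.finite_of_finrank_eq_succ hE
  have horth : Orthonormal ℝ (({0} : Set (Fin 2)).domRestrict fun _ => u) :=
    ⟨fun _ => hu, fun i j hij => absurd (Subsingleton.elim i j) hij⟩
  obtain ⟨b, hb⟩ := horth.exists_orthonormalBasis_extension_of_card_eq (by simpa using hE)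
  refine ⟨b.equiv Complex.orthonormalBasisOneI (Equiv.refl _), ?_⟩
  rw [← hb 0 rfl, OrthonormalBasis.equiv_apply_basis]
  simp

theorem exists_linearIsometryEquiv_complex_inner_eq {E : Type*} [NormedAddCommGroup E]
    [InnerProductSpace ℝ E] (hE : Module.finrank ℝ E = 2) {ξ : E} (hξ : ξ ≠ 0) :
    ∃ e : E ≃ₗᵢ[ℝ] ℂ, ∀ x, inner ℝ x ξ = ‖ξ‖ * (e x).re := by
  have hnorm : ‖ξ‖ ≠ 0 := norm_ne_zero_iff.2 hξ
  obtain ⟨e, he⟩ := exists_linearIsometryEquiv_complex_apply_eq_one hE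
    (u := ‖ξ‖⁻¹ • ξ) (by rw [norm_smul, norm_inv, norm_norm, inv_mul_cancel₀ hnorm])
  refine ⟨e, fun x => ?_⟩
  have heξ : e ξ = ‖ξ‖ := by
    rw [e.map_smul] at he
    rw [← smul_inv_smul₀ hnorm (e ξ), he, Complex.real_smul, mul_one]
  rw [← e.inner_map_map, heξ, Complex.inner]
  simp

theorem LinearIsometryEquiv.setIntegral_closedBall_comp {E F G : Type*}
    [NormedAddCommGroup E] [InnerProductSpace ℝ E] [FiniteDimensional ℝ E]
    [MeasurableSpace E] [BorelSpace E]
    [NormedAddCommGroup F] [InnerProductSpace ℝ F] [FiniteDimensional ℝ F]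
    [MeasurableSpace F] [BorelSpace F]
    [NormedAddCommGroup G] [NormedSpace ℝ G] (e : E ≃ₗᵢ[ℝ] F) (g : F → G) (L : ℝ) :
    ∫ x in Metric.closedBall 0 L, g (e x) = ∫ y in Metric.closedBall 0 L, g y := by
  rw [← e.measurePreserving.setIntegral_preimage_emb e.toMeasurableEquiv.measurableEmbedding,
    e.preimage_closedBall, map_zero]

theorem Complex.setIntegral_closedBall_eq_polarCoord {G : Type*} [NormedAddCommGroup G]
    [NormedSpace ℝ G] {g : ℂ → G} (hg : Continuous g) {L : ℝ} (hL : 0 ≤ L) :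
    ∫ z in Metric.closedBall 0 L, g z =
      ∫ r in (0:ℝ)..L, r • ∫ θ in (-π)..π, g (Complex.polarCoord.symm (r, θ)) := by
  have hsymm : Continuous Complex.polarCoord.symm :=
    Complex.equivRealProdCLM.symm.continuous.comp continuous_polarCoord_symm
  set P : ℝ × ℝ → G := fun p => p.1 • g (Complex.polarCoord.symm p)
  have hset : polarCoord.target ∩ Complex.polarCoord.symm ⁻¹' Metric.closedBall 0 L =
      Set.Ioc 0 L ×ˢ Set.Ioo (-π) π := by
    ext ⟨r, θ⟩
    simp only [Set.mem_inter_iff, Set.mem_preimage, mem_closedBall_zero_iff,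
      Complex.norm_polarCoord_symm, polarCoord_target, Set.mem_prod, Set.mem_Ioi, Set.mem_Ioc]
    constructor
    · rintro ⟨⟨hr, hθ⟩, hrL⟩; exact ⟨⟨hr, by rwa [abs_of_pos hr] at hrL⟩, hθ⟩
    · rintro ⟨⟨hr, hrL⟩, hθ⟩; exact ⟨⟨hr, hθ⟩, by rwa [abs_of_pos hr]⟩
  have hint : IntegrableOn P (Set.Ioc 0 L ×ˢ Set.Ioo (-π) π) (volume.prod volume) :=
    ((continuous_fst.smul (hg.comp hsymm)).continuousOn
      |>.integrableOn_compact (isCompact_Icc.prod isCompact_Icc)).mono_set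
      (Set.prod_mono Set.Ioc_subset_Icc_self Set.Ioo_subset_Icc_self)
  calc ∫ z in Metric.closedBall 0 L, g z
      = ∫ p in polarCoord.target,
          (Complex.polarCoord.symm ⁻¹' Metric.closedBall 0 L).indicator P p := by
        rw [← integral_indicator Metric.isClosed_closedBall.measurableSet,
          ← Complex.integral_comp_polarCoord_symm]
        congr! 2 with p
        by_cases h : p ∈ Complex.polarCoord.symm ⁻¹' Metric.closedBall 0 L
        · rw [Set.indicator_of_mem h, Set.indicator_of_mem (Set.mem_preimage.1 h)]
        · rw [Set.indicator_of_notMem h, Set.indicator_of_notMem (by exact h), smul_zero]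
    _ = ∫ p in Set.Ioc 0 L ×ˢ Set.Ioo (-π) π, P p := by
        rw [setIntegral_indicator
          (Metric.isClosed_closedBall.measurableSet.preimage hsymm.measurable), hset]
    _ = _ := by
        rw [Measure.volume_eq_prod, setIntegral_prod P hint, intervalIntegral.integral_of_le hL]
        refine setIntegral_congr_fun measurableSet_Ioc fun r _ => ?_
        rw [intervalIntegral.integral_of_le (by linarith [pi_pos]), integral_Ioc_eq_integral_Ioo,
          integral_smul]

/-- Fourier transform of the disk indicator in two dimensions: if `f` is the indicator of
the closed ball of radius `L > 0` centered at the origin of `ℝ²`, then for every `ξ ≠ 0`,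
`𝓕f(ξ) = ∫_{ℝ²} f(x)·exp(−2πi⟨x,ξ⟩) dx = L·J₁(2πL·‖ξ‖)/‖ξ‖`. -/
theorem fourier_disk_indicator (L : ℝ) (hL : 0 < L)
    (f : EuclideanSpace ℝ (Fin 2) → ℂ)
    (hf : f = Set.indicator (Metric.closedBall 0 L) (fun _ => (1 : ℂ))) :
    ∀ ξ : EuclideanSpace ℝ (Fin 2), ξ ≠ 0 →
      VectorFourier.fourierIntegral Real.fourierChar volume (innerₗ (EuclideanSpace ℝ (Fin 2))) f ξ = ((L * J1 (2 * π * L * ‖ξ‖) / ‖ξ‖ : ℝ) : ℂ) := by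
  intro ξ hξ
  obtain ⟨e, he⟩ := exists_linearIsometryEquiv_complex_inner_eq finrank_euclideanSpace_fin hξ
  have hfreq : 2 * π * ‖ξ‖ ≠ 0 := by positivity
  set g : ℂ → ℂ := fun z => Complex.exp (↑(-2 * π * (‖ξ‖ * z.re)) * Complex.I)
  calc _ = ∫ x in Metric.closedBall 0 L, g (e x) := by
        refine (Real.fourier_eq' f ξ).trans ?_
        rw [← integral_indicator Metric.isClosed_closedBall.measurableSet]
        congr 1 with v
        by_cases hv : v ∈ Metric.closedBall 0 L <;> simp [hf, hv, he, g]
    _ = ∫ z in Metric.closedBall 0 L, g z := e.setIntegral_closedBall_comp g L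
    _ = ∫ r in (0:ℝ)..L, r • ∫ θ in (-π)..π, g (Complex.polarCoord.symm (r, θ)) :=
        Complex.setIntegral_closedBall_eq_polarCoord (by fun_prop) hL.le
    _ = ∫ r in (0:ℝ)..L, ((2 * π * (r * J0 (2 * π * ‖ξ‖ * r)) : ℝ) : ℂ) := by
        congr with r
        have hre : ∀ θ, (Complex.polarCoord.symm (r, θ)).re = r * cos θ := fun θ => by
          simp [Complex.cos_ofReal_re]
        simp_rw [g, hre, ← mul_assoc, ← neg_mul_eq_neg_mul]
        rw [integral_exp_neg_mul_cos_mul_I, Complex.real_smul]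
        push_cast
        ring
    _ = _ := by
        rw [intervalIntegral.integral_ofReal, intervalIntegral.integral_const_mul,
          integral_mul_J0_comp_mul_left hfreq]
        congr 1
        field_simp
end

section
/- Mellin transform of the scaled K₀: for every q > 0 and every real s > 0, the function x ↦ x^{s−1}·K₀(√q·x) is Lebesgue integrable on (0,∞) and ∫₀^∞ x^{s−1}·K₀(√q·x) dx = 2^{s−2}·q^{−s/2}·Γ(s/2)², where Γ is the real Gamma function. -/
open Real MeasureTheory Set

lemma K0_rep {y : ℝ} (hy : 0 < y) :
    (∫ t in Ioi (0:ℝ), Real.exp (-y * Real.cosh t)) =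
      ∫ v in Ioi (0:ℝ), (1/2) * (Real.exp (-(v + y^2/(4*v))) / v) := by
  have hy2 : 0 < y / 2 := by linarith
  have himg : (fun t : ℝ => (y/2) * Real.exp t) '' univ = Ioi 0 := by
    rw [image_univ]
    ext z
    simp only [mem_range, mem_Ioi]
    constructor
    · rintro ⟨t, rfl⟩; positivity
    · intro hz
      exact ⟨Real.log (z / (y/2)), by
        rw [Real.exp_log (by positivity), mul_div_cancel₀ _ hy2.ne']⟩
  have hderiv : ∀ t ∈ (univ : Set ℝ),
      HasDerivWithinAt (fun t : ℝ => (y/2) * Real.exp t) ((y/2) * Real.exp t) univ t :=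
    fun t _ => ((Real.hasDerivAt_exp t).const_mul (y/2)).hasDerivWithinAt
  have hinj : InjOn (fun t : ℝ => (y/2) * Real.exp t) univ := by
    intro a _ b _ h
    simpa using Real.exp_injective (mul_left_cancel₀ hy2.ne' h)
  have hsub := integral_image_eq_integral_abs_deriv_smul MeasurableSet.univ hderiv hinj
      (fun v => (1/2) * (Real.exp (-(v + y^2/(4*v))) / v))
  rw [himg] at hsub
  rw [hsub, Measure.restrict_univ]
  have key : ∀ t : ℝ, |(y/2) * Real.exp t| •
      ((1/2) * (Real.exp (-((y/2) * Real.exp t + y^2/(4*((y/2) * Real.exp t)))) /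
        ((y/2) * Real.exp t))) = (1/2) * Real.exp (-y * Real.cosh t) := by
    intro t
    have he : (0:ℝ) < (y/2) * Real.exp t := by positivity
    rw [abs_of_pos he, smul_eq_mul]
    have h2 : y^2/(4*((y/2) * Real.exp t)) = (y/2) * Real.exp (-t) := by
      rw [Real.exp_neg]
      rw [div_eq_iff (by positivity : (4:ℝ)*((y/2)*Real.exp t) ≠ 0)]
      field_simp
      ring
    have harg : (y/2) * Real.exp t + y^2/(4*((y/2) * Real.exp t)) = y * Real.cosh t := by
      rw [h2, Real.cosh_eq]; ring
    rw [harg]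
    field_simp
  rw [integral_congr_ae (Filter.Eventually.of_forall key)]
  rw [integral_const_mul]
  have hc : (fun t : ℝ => Real.exp (-y * Real.cosh t)) =
      fun t : ℝ => Real.exp (-y * Real.cosh |t|) := by
    funext t; rw [Real.cosh_abs]
  rw [hc, integral_comp_abs (f := fun t => Real.exp (-y * Real.cosh t))]
  rw [show (1:ℝ)/2 * (2 * ∫ t in Ioi (0:ℝ), Real.exp (-y * Real.cosh t)) =
      ∫ t in Ioi (0:ℝ), Real.exp (-y * Real.cosh t) from by ring]
  refine setIntegral_congr_fun measurableSet_Ioi fun t ht => ?_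
  rw [Real.cosh_abs]

lemma tonelli_aux {f : ℝ → ℝ → ℝ}
    (hm : AEStronglyMeasurable (fun p : ℝ × ℝ => f p.1 p.2)
      ((volume.restrict (Ioi (0:ℝ))).prod (volume.restrict (Ioi (0:ℝ)))))
    (hnn : ∀ x ∈ Ioi (0:ℝ), ∀ v ∈ Ioi (0:ℝ), 0 ≤ f x v)
    (hint2 : ∀ v ∈ Ioi (0:ℝ), IntegrableOn (fun x => f x v) (Ioi 0))
    (hh : IntegrableOn (fun v => ∫ x in Ioi (0:ℝ), f x v) (Ioi 0)) :
    IntegrableOn (fun x => ∫ v in Ioi (0:ℝ), f x v) (Ioi 0) ∧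
      ∫ x in Ioi (0:ℝ), ∫ v in Ioi (0:ℝ), f x v = ∫ v in Ioi (0:ℝ), ∫ x in Ioi (0:ℝ), f x v := by
  set μ := volume.restrict (Ioi (0:ℝ)) with hμ
  have hF : Integrable (fun p : ℝ × ℝ => f p.1 p.2) (μ.prod μ) := by
    rw [integrable_prod_iff' hm]
    constructor
    · filter_upwards [ae_restrict_mem measurableSet_Ioi] with v hv
      exact hint2 v hv
    · refine hh.congr ?_
      filter_upwards [ae_restrict_mem measurableSet_Ioi] with v hv
      refine integral_congr_ae ?_
      filter_upwards [ae_restrict_mem measurableSet_Ioi] with x hx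
      exact (Real.norm_of_nonneg (hnn x hx v hv)).symm
  exact ⟨hF.integral_prod_left, integral_integral_swap hF⟩

lemma gauss_mellin (s : ℝ) (hs : 0 < s) {b : ℝ} (hb : 0 < b) :
    ∫ x in Ioi (0:ℝ), x ^ (s-1) * Real.exp (-b * x^2)
      = b ^ (-s/2) * (1/2) * Real.Gamma (s/2) := by
  have h := integral_rpow_mul_exp_neg_mul_rpow (by norm_num : (0:ℝ) < 2)
      (by linarith : (-1:ℝ) < s - 1) hb
  rw [show s - 1 + 1 = s from by ring] at h
  rw [← h]
  refine setIntegral_congr_fun measurableSet_Ioi fun x hx => ?_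
  norm_num [Real.rpow_natCast x 2]

lemma rpow_aux (q s v : ℝ) (hq : 0 < q) (hv : 0 < v) :
    (q/(4*v)) ^ (-s/2) = q ^ (-s/2) * ((2:ℝ) ^ s * v ^ (s/2)) := by
  have h4v : (0:ℝ) < 4*v := by positivity
  rw [show -s/2 = -(s/2) from by ring, Real.div_rpow hq.le h4v.le,
    Real.rpow_neg h4v.le, div_eq_mul_inv, inv_inv,
    Real.mul_rpow (by norm_num : (0:ℝ) ≤ 4) hv.le,
    show (4:ℝ) = (2:ℝ) ^ (2:ℝ) from by
      rw [show (2:ℝ) = ((2:ℕ):ℝ) from by norm_num, Real.rpow_natCast]; norm_num,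
    ← Real.rpow_mul (by norm_num : (0:ℝ) ≤ 2), show 2 * (s/2) = s from by ring]

/-- Mellin transform of the scaled `K₀`: for every `q > 0` and `s > 0`, the function
`x ↦ x^{s−1}·K₀(√q·x)` is Lebesgue integrable on `(0,∞)` and
`∫₀^∞ x^{s−1}·K₀(√q·x) dx = 2^{s−2}·q^{−s/2}·Γ(s/2)²`. -/
theorem mellin_K0 (q s : ℝ) (hq : 0 < q) (hs : 0 < s) :
    IntegrableOn (fun x : ℝ => x ^ (s - 1) * K0 (Real.sqrt q * x)) (Ioi 0) ∧
      ∫ x in Ioi (0:ℝ), x ^ (s - 1) * K0 (Real.sqrt q * x) =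
        (2:ℝ) ^ (s - 2) * q ^ (-s / 2) * Real.Gamma (s / 2) ^ 2 := by
  have ha : 0 < Real.sqrt q := Real.sqrt_pos.mpr hq
  set C : ℝ := (2:ℝ)^(s-2) * q^(-s/2) * Real.Gamma (s/2) with hC
  set f : ℝ → ℝ → ℝ :=
    fun x v => x ^ (s-1) * ((1/2) * (Real.exp (-(v + q*x^2/(4*v))) / v)) with hf
  -- pointwise identity
  have hK : ∀ x ∈ Ioi (0:ℝ),
      x ^ (s - 1) * K0 (Real.sqrt q * x) = ∫ v in Ioi (0:ℝ), f x v := by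
    intro x hx
    have hax : 0 < Real.sqrt q * x := mul_pos ha hx
    have h2 : (Real.sqrt q * x)^2 = q * x^2 := by
      rw [mul_pow, Real.sq_sqrt hq.le]
    rw [K0, K0_rep hax]
    simp only [h2, hf]
    rw [← integral_const_mul]
  -- splitting of the integrand
  have hsplit : ∀ v : ℝ, ∀ x : ℝ, f x v =
      ((1/2) * (Real.exp (-v)/v)) * (x ^ (s-1) * Real.exp (-(q/(4*v)) * x^2)) := by
    intro v x
    simp only [hf]
    rw [show -(v + q*x^2/(4*v)) = -v + -(q/(4*v)) * x^2 from by ring, Real.exp_add]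
    ring
  -- inner integral value
  have hval : ∀ v ∈ Ioi (0:ℝ),
      ∫ x in Ioi (0:ℝ), f x v = C * (Real.exp (-v) * v ^ (s/2 - 1)) := by
    intro v hv
    have hv' : (0:ℝ) < v := hv
    have hb : 0 < q/(4*v) := by positivity
    rw [setIntegral_congr_fun measurableSet_Ioi (fun x _ => hsplit v x),
      integral_const_mul, gauss_mellin s hs hb, rpow_aux q s v hq hv']
    have e1 : v ^ (s/2 - 1) = v ^ (s/2) * v⁻¹ := by
      rw [show s/2 - 1 = s/2 + (-1) from by ring, Real.rpow_add hv', Real.rpow_neg_one]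
    have e2 : (2:ℝ)^(s-2) = 2^s/4 := by
      rw [Real.rpow_sub (by norm_num : (0:ℝ) < 2),
        show (2:ℝ)^(2:ℝ) = 4 from by
          rw [show (2:ℝ) = ((2:ℕ):ℝ) from by norm_num, Real.rpow_natCast]; norm_num]
    rw [hC, e1, e2]
    field_simp
    ring
  -- integrability in x for fixed v
  have hint2 : ∀ v ∈ Ioi (0:ℝ), IntegrableOn (fun x => f x v) (Ioi 0) := by
    intro v hv
    have hv' : (0:ℝ) < v := hv
    have hb : 0 < q/(4*v) := by positivity
    have h := (integrableOn_rpow_mul_exp_neg_mul_sq hb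
      (by linarith : (-1:ℝ) < s - 1)).const_mul ((1/2) * (Real.exp (-v)/v))
    exact IntegrableOn.congr_fun h (fun x _ => (hsplit v x).symm) measurableSet_Ioi
  -- integrability of the v-marginal
  have hGint : IntegrableOn (fun v : ℝ => Real.exp (-v) * v ^ (s/2 - 1)) (Ioi 0) :=
    Real.GammaIntegral_convergent (by positivity)
  have hh : IntegrableOn (fun v => ∫ x in Ioi (0:ℝ), f x v) (Ioi 0) :=
    IntegrableOn.congr_fun (hGint.const_mul C) (fun v hv => (hval v hv).symm) measurableSet_Ioi
  -- measurability
  have hm : AEStronglyMeasurable (fun p : ℝ × ℝ => f p.1 p.2)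
      ((volume.restrict (Ioi (0:ℝ))).prod (volume.restrict (Ioi (0:ℝ)))) := by
    apply Measurable.aestronglyMeasurable
    simp only [hf]
    fun_prop
  have hnn : ∀ x ∈ Ioi (0:ℝ), ∀ v ∈ Ioi (0:ℝ), 0 ≤ f x v := by
    intro x hx v hv
    have hx' : (0:ℝ) < x := hx
    have hv' : (0:ℝ) < v := hv
    simp only [hf]
    positivity
  obtain ⟨hInt, hSwap⟩ := tonelli_aux hm hnn hint2 hh
  constructor
  · exact hInt.congr_fun (fun x hx => (hK x hx).symm) measurableSet_Ioi
  · calc ∫ x in Ioi (0:ℝ), x ^ (s - 1) * K0 (Real.sqrt q * x)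
        = ∫ x in Ioi (0:ℝ), ∫ v in Ioi (0:ℝ), f x v :=
          setIntegral_congr_fun measurableSet_Ioi hK
      _ = ∫ v in Ioi (0:ℝ), ∫ x in Ioi (0:ℝ), f x v := hSwap
      _ = ∫ v in Ioi (0:ℝ), C * (Real.exp (-v) * v ^ (s/2 - 1)) :=
          setIntegral_congr_fun measurableSet_Ioi hval
      _ = C * Real.Gamma (s/2) := by
          rw [integral_const_mul, ← Real.Gamma_eq_integral (by positivity : 0 < s/2)]
      _ = (2:ℝ) ^ (s - 2) * q ^ (-s / 2) * Real.Gamma (s / 2) ^ 2 := by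
          rw [hC]; ring
end
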